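/- arXiv:2504.13826 — 3 statements merged into one kernel-verified Lean document; each statement's English description precedes it below -/
import Mathlib

section
/- Let T be a finite tree in which every leaf belongs to one fixed part of a bipartition of T. Then the Jordan center of T consists of exactly one vertex. In particular, the block tree of a finite connected simple graph has a one-element center. -/
open SimpleGraph

set_option linter.unusedSectionVars false

/-- The eccentricity of a vertex: the maximum distance to any vertex. -/
noncomputable def eccent {V : Type*} (G : SimpleGraph V) (v : V) : ℕ :=
  sSup (Set.range fun w => G.dist v w)

/-- The Jordan center: the set of vertices of minimum eccentricity. -/
def jordanCenter {V : Type*} (G : SimpleGraph V) : Set V :=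
  {v | ∀ w, _root_.eccent G v ≤ _root_.eccent G w}

section AuxJC

variable {V : Type*} {G : SimpleGraph V}

lemma JCaux.dist_le_eccent [Fintype V] (v w : V) : G.dist v w ≤ _root_.eccent G v :=
  le_csSup ((Set.finite_range _).bddAbove) ⟨w, rfl⟩

lemma JCaux.exists_eccent [Fintype V] (v : V) : ∃ w, G.dist v w = _root_.eccent G v := by
  have hne : (Set.range fun w => G.dist v w).Nonempty := ⟨G.dist v v, v, rfl⟩
  exact Nat.sSup_mem hne ((Set.finite_range _).bddAbove)

lemma JCaux.walk_parity {c : V → Bool} (hc : ∀ {u v}, G.Adj u v → c u ≠ c v)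
    {u w : V} (p : G.Walk u w) : c u = c w ↔ Even p.length := by
  induction p with
  | nil => simp
  | @cons a b d h q ih =>
    have hab := hc h
    simp only [SimpleGraph.Walk.length_cons, Nat.even_add_one, ← ih]
    revert hab
    cases c a <;> cases c b <;> cases c d <;> simp

lemma JCaux.dist_parity (hconn : G.Connected) {c : V → Bool}
    (hc : ∀ {u v}, G.Adj u v → c u ≠ c v) (u w : V) :
    c u = c w ↔ Even (G.dist u w) := by
  obtain ⟨p, hp⟩ := (hconn u w).exists_walk_length_eq_dist
  rw [← hp]
  exact JCaux.walk_parity hc p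

/-- In a tree, two neighbors of `u` that are both one step closer to `w` coincide. -/
lemma JCaux.two_nbrs [DecidableEq V] (hT : G.IsTree) {u x y w : V}
    (hx : G.Adj u x) (hy : G.Adj u y)
    (hdx : G.dist x w + 1 = G.dist u w) (hdy : G.dist y w + 1 = G.dist u w) : x = y := by
  have hreach : ∀ a b : V, G.Reachable a b := fun a b => hT.isConnected a b
  obtain ⟨px, hpx, hlx⟩ := (hreach x w).exists_path_of_dist
  obtain ⟨py, hpy, hly⟩ := (hreach y w).exists_path_of_dist
  have hux : u ∉ px.support := by
    intro hu
    have h1 : G.dist u w ≤ (px.dropUntil u hu).length := SimpleGraph.dist_le _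
    have h2 : (px.dropUntil u hu).length ≤ px.length := SimpleGraph.Walk.length_dropUntil_le px hu
    omega
  have huy : u ∉ py.support := by
    intro hu
    have h1 : G.dist u w ≤ (py.dropUntil u hu).length := SimpleGraph.dist_le _
    have h2 : (py.dropUntil u hu).length ≤ py.length := SimpleGraph.Walk.length_dropUntil_le py hu
    omega
  have hPx : (px.cons hx).IsPath := hpx.cons hux
  have hPy : (py.cons hy).IsPath := hpy.cons huy
  obtain ⟨q, -, huniq⟩ := hT.existsUnique_path u w
  have heq : px.cons hx = py.cons hy := by
    rw [huniq _ hPx, huniq _ hPy]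
  have := congrArg (fun p : G.Walk u w => p.getVert 1) heq
  simpa [SimpleGraph.Walk.getVert_cons] using this

lemma JCaux.dist_getVert_le (hconn : G.Connected) {u v : V} (p : G.Walk u v) (i : ℕ) :
    G.dist u (p.getVert i) ≤ i := by
  induction p generalizing i with
  | nil =>
    rw [SimpleGraph.Walk.getVert_of_length_le _ (Nat.zero_le i)]
    exact le_trans (le_of_eq SimpleGraph.dist_self) (Nat.zero_le _)
  | @cons a b d h q ih =>
    cases i with
    | zero => simp
    | succ n =>
      have h1 : G.dist a (q.getVert n) ≤ G.dist a b + G.dist b (q.getVert n) :=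
        hconn.dist_triangle
      have h2 : G.dist a b = 1 := SimpleGraph.dist_eq_one_iff_adj.mpr h
      have h3 := ih n
      simp only [SimpleGraph.Walk.getVert_cons_succ]
      omega

lemma JCaux.getVert_dist_le {u v : V} (p : G.Walk u v) (i : ℕ) :
    G.dist (p.getVert i) v ≤ p.length - i := by
  induction p generalizing i with
  | nil =>
    rw [SimpleGraph.Walk.getVert_of_length_le _ (Nat.zero_le i)]
    exact le_trans (le_of_eq SimpleGraph.dist_self) (Nat.zero_le _)
  | @cons a b d h q ih =>
    cases i with
    | zero =>
      simpa using SimpleGraph.dist_le (SimpleGraph.Walk.cons h q)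
    | succ n =>
      have := ih n
      simp only [SimpleGraph.Walk.getVert_cons_succ, SimpleGraph.Walk.length_cons]
      omega

lemma JCaux.dist_getVert_eq (hconn : G.Connected) {u v : V} (p : G.Walk u v)
    (hp : p.length = G.dist u v) {i : ℕ} (hi : i ≤ p.length) :
    G.dist u (p.getVert i) = i := by
  have h1 := JCaux.dist_getVert_le hconn p i
  have h2 := JCaux.getVert_dist_le p i
  have h3 : G.dist u v ≤ G.dist u (p.getVert i) + G.dist (p.getVert i) v :=
    hconn.dist_triangle
  omega

/-- A vertex realizing the eccentricity of `u` is a leaf (when the eccentricity is positive). -/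
lemma JCaux.attained_leaf [Fintype V] [DecidableEq V] (hT : G.IsTree) {c : V → Bool}
    (hc : ∀ {u v}, G.Adj u v → c u ≠ c v) {u w : V}
    (hw : G.dist u w = _root_.eccent G u) (hpos : _root_.eccent G u ≠ 0) : ∃! s, G.Adj w s := by
  have hconn := hT.isConnected
  have hdwu : G.dist w u ≠ 0 := by rw [SimpleGraph.dist_comm]; omega
  -- every neighbor of w is one step closer to u
  have hstep : ∀ s, G.Adj w s → G.dist s u + 1 = G.dist w u := by
    intro s hs
    have h1 : G.dist u s ≤ _root_.eccent G u := JCaux.dist_le_eccent u s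
    have h2 : G.dist s w = 1 := SimpleGraph.dist_eq_one_iff_adj.mpr hs.symm
    have h3 : G.dist u w ≤ G.dist u s + G.dist s w := hconn.dist_triangle
    have h4 : G.dist u s ≠ G.dist u w := by
      intro he
      have p1 := JCaux.dist_parity hconn hc u s
      have p2 := JCaux.dist_parity hconn hc u w
      rw [he] at p1
      have hiff : (c u = c s) ↔ (c u = c w) := p1.trans p2.symm
      have hsw := hc hs
      revert hiff hsw
      cases c u <;> cases c s <;> cases c w <;> simp_all
    have c1 : G.dist s u = G.dist u s := SimpleGraph.dist_comm
    have c2 : G.dist w u = G.dist u w := SimpleGraph.dist_comm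
    omega
  obtain ⟨p, hp⟩ := (hconn w u).exists_walk_length_eq_dist
  cases p with
  | nil => rw [← hp] at hdwu; simp at hdwu
  | @cons _ b _ hadj q =>
    refine ⟨b, hadj, fun s hs => ?_⟩
    exact JCaux.two_nbrs hT hs hadj (hstep s hs) (hstep b hadj)

lemma JCaux.ecc_parity [Fintype V] [DecidableEq V] (hT : G.IsTree) {c : V → Bool}
    (hc : ∀ {u v}, G.Adj u v → c u ≠ c v)
    (hleaf : ∀ v, (∃! w, G.Adj v w) → c v = true)
    (u : V) (hpos : _root_.eccent G u ≠ 0) : (Even (_root_.eccent G u) ↔ c u = true) := by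
  obtain ⟨w, hw⟩ := JCaux.exists_eccent (G := G) u
  have hcw : c w = true := hleaf w (JCaux.attained_leaf hT hc hw hpos)
  have := JCaux.dist_parity hT.isConnected hc u w
  rw [hw, hcw] at this
  exact this.symm

lemma JCaux.adj_ecc_ne [Fintype V] [DecidableEq V] (hT : G.IsTree) {c : V → Bool}
    (hc : ∀ {u v}, G.Adj u v → c u ≠ c v)
    (hleaf : ∀ v, (∃! w, G.Adj v w) → c v = true)
    {u v : V} (h : G.Adj u v) : _root_.eccent G u ≠ _root_.eccent G v := by
  have h1 : G.dist u v = 1 := SimpleGraph.dist_eq_one_iff_adj.mpr h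
  have hu : _root_.eccent G u ≠ 0 := by have := JCaux.dist_le_eccent (G := G) u v; omega
  have hv : _root_.eccent G v ≠ 0 := by
    have := JCaux.dist_le_eccent (G := G) v u
    rw [SimpleGraph.dist_comm] at this; omega
  have p1 := JCaux.ecc_parity hT hc hleaf u hu
  have p2 := JCaux.ecc_parity hT hc hleaf v hv
  have hcc := hc h
  intro he
  rw [he] at p1
  have hiff : (c u = true) ↔ (c v = true) := p1.symm.trans p2
  revert hcc hiff
  cases c u <;> cases c v <;> simp_all

lemma JCaux.ecc_adj_le [Fintype V] (hconn : G.Connected) {u v : V} (h : G.Adj u v) :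
    _root_.eccent G u ≤ _root_.eccent G v + 1 := by
  obtain ⟨w, hw⟩ := JCaux.exists_eccent (G := G) u
  have h1 : G.dist u w ≤ G.dist u v + G.dist v w := hconn.dist_triangle
  have h2 : G.dist u v = 1 := SimpleGraph.dist_eq_one_iff_adj.mpr h
  have h3 : G.dist v w ≤ _root_.eccent G v := JCaux.dist_le_eccent v w
  omega

lemma JCaux.no_local_max [Fintype V] [DecidableEq V] (hT : G.IsTree) {u x y : V}
    (hx : G.Adj u x) (hy : G.Adj u y) (hxy : x ≠ y)
    (h1 : _root_.eccent G x < _root_.eccent G u) (h2 : _root_.eccent G y < _root_.eccent G u) : False := by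
  have hconn := hT.isConnected
  obtain ⟨w, hw⟩ := JCaux.exists_eccent (G := G) u
  have hdx : G.dist x w + 1 = G.dist u w := by
    have a1 : G.dist x w ≤ _root_.eccent G x := JCaux.dist_le_eccent x w
    have a2 : G.dist u w ≤ G.dist u x + G.dist x w := hconn.dist_triangle
    have a3 : G.dist u x = 1 := SimpleGraph.dist_eq_one_iff_adj.mpr hx
    omega
  have hdy : G.dist y w + 1 = G.dist u w := by
    have a1 : G.dist y w ≤ _root_.eccent G y := JCaux.dist_le_eccent y w
    have a2 : G.dist u w ≤ G.dist u y + G.dist y w := hconn.dist_triangle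
    have a3 : G.dist u y = 1 := SimpleGraph.dist_eq_one_iff_adj.mpr hy
    omega
  exact hxy (JCaux.two_nbrs hT hx hy hdx hdy)

end AuxJC

/-- If all leaves of a finite tree lie in one part of a bipartition,
then the Jordan center consists of exactly one vertex. -/
theorem stmt5 {V : Type*} [Fintype V] (T : SimpleGraph V) (hT : T.IsTree)
    (c : V → Bool) (hc : ∀ {u v}, T.Adj u v → c u ≠ c v)
    (hleaf : ∀ v, (∃! w, T.Adj v w) → c v = true) :
    ∃ z, jordanCenter T = {z} := by
  classical
  have hconn := hT.isConnected
  have hne : Nonempty V := hconn.nonempty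
  obtain ⟨z, -, hz⟩ := Finset.exists_min_image Finset.univ (_root_.eccent T)
    ⟨Classical.arbitrary V, Finset.mem_univ _⟩
  refine ⟨z, ?_⟩
  ext v
  simp only [jordanCenter, Set.mem_setOf_eq, Set.mem_singleton_iff]
  constructor
  · intro hv
    by_contra hvz
    have hr : _root_.eccent T v = _root_.eccent T z := le_antisymm (hv z) (hz v (Finset.mem_univ v))
    obtain ⟨p, hplen⟩ := (hconn v z).exists_walk_length_eq_dist
    have hk0 : T.dist v z ≠ 0 :=
      SimpleGraph.dist_ne_zero_iff_ne_and_reachable.mpr ⟨hvz, hconn v z⟩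
    set k := T.dist v z with hk
    have hstepf : ∀ i < k, _root_.eccent T (p.getVert (i + 1)) = _root_.eccent T (p.getVert i) + 1 ∨
        _root_.eccent T (p.getVert i) = _root_.eccent T (p.getVert (i + 1)) + 1 := by
      intro i hi
      have hadj := p.adj_getVert_succ (by omega : i < p.length)
      have h1 := JCaux.ecc_adj_le hconn hadj
      have h2 := JCaux.ecc_adj_le hconn hadj.symm
      have h3 := JCaux.adj_ecc_ne hT hc hleaf hadj
      omega
    have hge : ∀ i, _root_.eccent T z ≤ _root_.eccent T (p.getVert i) :=
      fun i => hz _ (Finset.mem_univ _)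
    have hf0 : _root_.eccent T (p.getVert 0) = _root_.eccent T z := by rw [p.getVert_zero]; exact hr
    have hfk : _root_.eccent T (p.getVert k) = _root_.eccent T z := by
      have : p.getVert k = z := by rw [← hplen]; exact p.getVert_length
      rw [this]
    have hex : ∃ i, i < k ∧ _root_.eccent T (p.getVert (i + 1)) < _root_.eccent T (p.getVert i) := by
      by_contra hno
      push_neg at hno
      have mono : ∀ i, i ≤ k → _root_.eccent T z + i ≤ _root_.eccent T (p.getVert i) := by
        intro i
        induction i with
        | zero => intro _; omega
        | succ n ih =>
          intro hnk
          have h1 := ih (by omega)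
          have h2 := hno n (by omega)
          have h3 := hstepf n (by omega)
          omega
      have := mono k le_rfl
      omega
    obtain ⟨hi0k, hi0dec⟩ := Nat.find_spec hex
    set i0 := Nat.find hex with hi0def
    have hi0pos : i0 ≠ 0 := by
      intro h0
      rw [h0] at hi0dec
      simp only [Nat.zero_add] at hi0dec
      have h1 := hge 1
      omega
    obtain ⟨j, hj⟩ : ∃ j, i0 = j + 1 := ⟨i0 - 1, by omega⟩
    have hnotdec : ¬(j < k ∧ _root_.eccent T (p.getVert (j + 1)) < _root_.eccent T (p.getVert j)) :=
      Nat.find_min hex (by omega)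
    have hasc : _root_.eccent T (p.getVert (j + 1)) = _root_.eccent T (p.getVert j) + 1 := by
      have h3 := hstepf j (by omega)
      have hjk : j < k := by omega
      omega
    have hadjx : T.Adj (p.getVert i0) (p.getVert j) := by
      rw [hj]
      exact (p.adj_getVert_succ (by omega : j < p.length)).symm
    have hadjy : T.Adj (p.getVert i0) (p.getVert (i0 + 1)) :=
      p.adj_getVert_succ (by omega : i0 < p.length)
    have hxyne : p.getVert j ≠ p.getVert (i0 + 1) := by
      intro he
      have d1 : T.dist v (p.getVert j) = j :=
        JCaux.dist_getVert_eq hconn p (by omega) (by omega)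
      have d2 : T.dist v (p.getVert (i0 + 1)) = i0 + 1 :=
        JCaux.dist_getVert_eq hconn p (by omega) (by omega)
      rw [he, d2] at d1
      omega
    refine JCaux.no_local_max hT hadjx hadjy hxyne ?_ ?_
    · rw [hj]; omega
    · exact hi0dec
  · rintro rfl
    exact fun w => hz w (Finset.mem_univ w)
end

section
/- Let X be a finite simple graph with adjacency matrix A_X, let B be a unital C*-algebra, and let u ∈ M_{V(X)}(B) be a magic unitary. Then u commutes with A_X (i.e., u A_X = A_X u, with entries of A_X regarded as scalars) if and only if for all vertices i, j, k, l with rel(i,k) ≠ rel(j,l) one has u_{ij} u_{kl} = 0, where rel(i,k) takes the value 'equal' if i = k, 'adjacent' if i ~ k, and 'non-adjacent' otherwise. -/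
/-! Over a C⋆-algebra, projections summing to `1` are mutually orthogonal, so each row and each
column of a magic unitary consists of orthogonal projections. Hence
`u i j * (u * A) i l * u k l = u i j * A j l * u k l` and
`u i j * (A * u) i l * u k l = u i j * A i k * u k l`, and commutation forces `u i j * u k l = 0`
when exactly one of `j ~ l`, `i ~ k` holds; the cases `i = k` or `j = l` are orthogonality itself.
Conversely, inserting the row and column sums writes `(u * A) i l` and `(A * u) i l` as sums of the
products `u i j * u k l` weighted by `A j l` and `A i k` respectively, and these weights agree on
every nonzero product. -/

/-- A magic unitary: a square matrix of self-adjoint idempotents whose rows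
and columns each sum to `1`. -/
def IsMagicUnitary {A : Type*} [Ring A] [StarRing A] {n : Type*} [Fintype n]
    (u : Matrix n n A) : Prop :=
  (∀ i j, star (u i j) = u i j) ∧ (∀ i j, u i j * u i j = u i j) ∧
    (∀ i, ∑ j, u i j = 1) ∧ (∀ j, ∑ i, u i j = 1)

/-- The relation type of a pair of vertices: `0` if equal, `1` if adjacent,
`2` if distinct and non-adjacent. -/
def relType {V : Type*} [DecidableEq V] (G : SimpleGraph V) [DecidableRel G.Adj]
    (i k : V) : Fin 3 :=
  if i = k then 0 else if G.Adj i k then 1 else 2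

theorem IsStarProjection.mul_eq_zero_of_sum_eq_one {A ι : Type*} [CStarAlgebra A] [Fintype ι]
    {p : ι → A} (hp : ∀ i, IsStarProjection (p i)) (hsum : ∑ i, p i = 1) {i j : ι}
    (hij : i ≠ j) : p i * p j = 0 := by
  classical
  let := CStarAlgebra.spectralOrder A
  have := CStarAlgebra.spectralOrderedRing A
  have hle : p j ≤ 1 - p i := by
    rw [le_sub_iff_add_le', ← hsum, ← Finset.sum_pair hij]
    exact Finset.sum_le_univ_sum_of_nonneg fun m => (hp m).nonneg
  have hmul : (1 - p i) * p j = p j := ((hp j).le_iff_mul_eq_right (hp i).one_sub).mp hle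
  rwa [sub_mul, one_mul, sub_eq_self] at hmul

namespace IsMagicUnitary

variable {n B : Type*} [Fintype n] {u : Matrix n n B}

section Ring

variable [Ring B] [StarRing B]

theorem isStarProjection (hu : IsMagicUnitary u) (i j : n) : IsStarProjection (u i j) :=
  ⟨hu.2.1 i j, hu.1 i j⟩

theorem commute_of_mul_eq_zero (hu : IsMagicUnitary u) {M : Matrix n n B}
    (hM : ∀ i j x, Commute (M i j) x)
    (h : ∀ i j k l, M j l ≠ M i k → u i j * u k l = 0) : Commute u M := by
  ext i l
  have hterm : ∀ j k, u i j * u k l * M j l = M i k * (u i j * u k l) := by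
    intro j k
    by_cases hjk : M j l = M i k
    · rw [hjk, (hM i k _).eq]
    · rw [h i j k l hjk, zero_mul, mul_zero]
  calc (u * M) i l = ∑ j, ∑ k, u i j * u k l * M j l := by
        simp only [Matrix.mul_apply, ← Finset.sum_mul, ← Finset.mul_sum, hu.2.2.2 l, mul_one]
    _ = ∑ k, ∑ j, M i k * (u i j * u k l) := by
        rw [Finset.sum_comm]; simp only [hterm]
    _ = (M * u) i l := by
        simp only [Matrix.mul_apply, ← Finset.mul_sum, ← Finset.sum_mul, hu.2.2.1 i, one_mul]

end Ring

variable [CStarAlgebra B]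

theorem mul_eq_zero_of_ne_right (hu : IsMagicUnitary u) (i : n) {j l : n} (hjl : j ≠ l) :
    u i j * u i l = 0 :=
  IsStarProjection.mul_eq_zero_of_sum_eq_one (hu.isStarProjection i) (hu.2.2.1 i) hjl

theorem mul_eq_zero_of_ne_left (hu : IsMagicUnitary u) (j : n) {i k : n} (hik : i ≠ k) :
    u i j * u k j = 0 :=
  IsStarProjection.mul_eq_zero_of_sum_eq_one (hu.isStarProjection · j) (hu.2.2.2 j) hik

theorem mul_mul_apply (hu : IsMagicUnitary u) (M : Matrix n n B) (i j l : n) :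
    u i j * (u * M) i l = u i j * M j l := by
  rw [Matrix.mul_apply, Finset.mul_sum, Finset.sum_eq_single j]
  · rw [← mul_assoc, (hu.isStarProjection i j).isIdempotentElem.eq]
  · intro m _ hmj
    rw [← mul_assoc, hu.mul_eq_zero_of_ne_right i hmj.symm, zero_mul]
  · simp

theorem mul_apply_mul (hu : IsMagicUnitary u) (M : Matrix n n B) (i k l : n) :
    (M * u) i l * u k l = M i k * u k l := by
  rw [Matrix.mul_apply, Finset.sum_mul, Finset.sum_eq_single k]
  · rw [mul_assoc, (hu.isStarProjection k l).isIdempotentElem.eq]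
  · intro m _ hmk
    rw [mul_assoc, hu.mul_eq_zero_of_ne_left l hmk, mul_zero]
  · simp

theorem mul_apply_mul_eq_of_commute (hu : IsMagicUnitary u) {M : Matrix n n B}
    (hc : Commute u M) (i j k l : n) :
    u i j * M j l * u k l = u i j * M i k * u k l := by
  rw [← hu.mul_mul_apply, hc.eq, mul_assoc, hu.mul_apply_mul, mul_assoc]

end IsMagicUnitary

section relType

variable {V : Type*} [DecidableEq V] (G : SimpleGraph V) [DecidableRel G.Adj]

theorem relType_eq_relType_iff {i j k l : V} :
    relType G i k = relType G j l ↔ (i = k ↔ j = l) ∧ (G.Adj i k ↔ G.Adj j l) := by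
  unfold relType
  by_cases hik : i = k <;> by_cases hjl : j = l <;> simp [hik, hjl] <;> split_ifs <;> simp_all

theorem adjMatrix_apply_eq_of_relType_eq (R : Type*) [Zero R] [One R] {i j k l : V}
    (h : relType G i k = relType G j l) : G.adjMatrix R i k = G.adjMatrix R j l := by
  simp only [SimpleGraph.adjMatrix_apply, ((relType_eq_relType_iff G).mp h).2]

end relType

theorem SimpleGraph.commute_adjMatrix_apply {V R : Type*} (G : SimpleGraph V) [DecidableRel G.Adj]
    [Semiring R] (i j : V) (x : R) : Commute (G.adjMatrix R i j) x := by
  rw [SimpleGraph.adjMatrix_apply]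
  split_ifs
  exacts [Commute.one_left x, Commute.zero_left x]

/-- A magic unitary commutes with the adjacency matrix of a graph iff
`u i j * u k l = 0` whenever `rel(i,k) ≠ rel(j,l)`. -/
theorem stmt12 {V : Type*} [Fintype V] [DecidableEq V]
    (G : SimpleGraph V) [DecidableRel G.Adj]
    {B : Type*} [NormedRing B] [StarRing B] [CStarRing B]
    [NormedAlgebra ℂ B] [CompleteSpace B] [StarModule ℂ B]
    (u : Matrix V V B) (hu : IsMagicUnitary u) :
    u * G.adjMatrix B = G.adjMatrix B * u ↔
      ∀ i j k l, relType G i k ≠ relType G j l → u i j * u k l = 0 := by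
  let : CStarAlgebra B := {}
  constructor
  · intro hc i j k l hrel
    by_contra hne
    refine hrel ((relType_eq_relType_iff G).mpr ⟨⟨?_, ?_⟩, ?_⟩)
    · rintro rfl
      by_contra hjl
      exact hne (hu.mul_eq_zero_of_ne_right i hjl)
    · rintro rfl
      by_contra hik
      exact hne (hu.mul_eq_zero_of_ne_left j hik)
    · have key := hu.mul_apply_mul_eq_of_commute hc i j k l
      simp only [SimpleGraph.adjMatrix_apply, mul_ite, ite_mul, mul_one, mul_zero, zero_mul] at key
      split_ifs at key <;> simp_all
  · intro h
    exact (hu.commute_of_mul_eq_zero G.commute_adjMatrix_apply fun i j k l hM =>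
      h i j k l fun hrel => hM (adjMatrix_apply_eq_of_relType_eq G B hrel).symm).eq
end

section
/- Every biconnected outerplanar graph on at least 3 vertices has a unique Hamiltonian cycle. -/
open SimpleGraph

/-- A cut vertex is a vertex whose removal increases the number of connected components. -/
def IsCutVertex {V : Type*} (G : SimpleGraph V) (v : V) : Prop :=
  Nat.card G.ConnectedComponent < Nat.card (G.induce {w | w ≠ v}).ConnectedComponent

/-- `G` has an `H`-minor: there are pairwise disjoint nonempty connected branch
sets in `G`, one for each vertex of `H`, with an edge of `G` between the branch
sets of any two adjacent vertices of `H`. -/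
def HasMinor {V W : Type*} (G : SimpleGraph V) (H : SimpleGraph W) : Prop :=
  ∃ f : W → Set V,
    (∀ w, (f w).Nonempty) ∧
    (∀ w, (G.induce (f w)).Connected) ∧
    (Pairwise fun w₁ w₂ => Disjoint (f w₁) (f w₂)) ∧
    (∀ a b, H.Adj a b → ∃ x ∈ f a, ∃ y ∈ f b, G.Adj x y)

/-- A graph is outerplanar iff it has no `K₄`-minor and no `K₂,₃`-minor. -/
def Outerplanar {V : Type*} (G : SimpleGraph V) : Prop :=
  ¬ HasMinor G (completeGraph (Fin 4)) ∧
    ¬ HasMinor G (completeBipartiteGraph (Fin 2) (Fin 3))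

/-- A graph is biconnected if it is connected, has at least 3 vertices, and
has no cut vertex. -/
def Biconnected {V : Type*} (G : SimpleGraph V) : Prop :=
  G.Connected ∧ 3 ≤ Nat.card V ∧ ∀ v : V, ¬ IsCutVertex G v

set_option linter.unusedSectionVars false

open SimpleGraph


namespace StmtAux

open SimpleGraph Walk

variable {V : Type*} [Fintype V] [DecidableEq V] {G : SimpleGraph V}

lemma induce_singleton_connected (x : V) : (G.induce {x}).Connected := by
  have hne : Nonempty ({x} : Set V) := ⟨⟨x, rfl⟩⟩
  refine ⟨fun a b => ?_⟩
  have : Subsingleton ({x} : Set V) := by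
    refine ⟨fun a b => Subtype.ext ?_⟩
    rcases a with ⟨a, ha⟩; rcases b with ⟨b, hb⟩
    simp only [Set.mem_singleton_iff] at ha hb
    simp [ha, hb]
  rw [Subsingleton.elim a b]

lemma conn_drop_first {u v : V} (p : G.Walk u v) (hp : p.IsPath) (huv : u ≠ v) :
    (G.induce {x | x ∈ p.support ∧ x ≠ u}).Connected := by
  cases p with
  | nil => exact absurd rfl huv
  | cons h q =>
    have hset : {x | x ∈ (Walk.cons h q).support ∧ x ≠ u} = {x | x ∈ q.support} := by
      ext t
      simp only [Walk.support_cons, List.mem_cons, Set.mem_setOf_eq]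
      constructor
      · rintro ⟨ht | ht, hne⟩
        · exact absurd ht hne
        · exact ht
      · intro ht
        refine ⟨Or.inr ht, ?_⟩
        rintro rfl
        exact ((Walk.cons_isPath_iff h q).mp hp).2 ht
    rw [hset]
    exact q.connected_induce_support

lemma conn_drop_last {u v : V} (p : G.Walk u v) (hp : p.IsPath) (huv : u ≠ v) :
    (G.induce {x | x ∈ p.support ∧ x ≠ v}).Connected := by
  have h := conn_drop_first p.reverse hp.reverse huv.symm
  have hset : {x | x ∈ p.reverse.support ∧ x ≠ v} = {x | x ∈ p.support ∧ x ≠ v} := by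
    ext t; simp [Walk.support_reverse]
  rwa [hset] at h

lemma conn_interior {u v : V} (p : G.Walk u v) (hp : p.IsPath) (huv : u ≠ v)
    (hne : ∃ z, z ∈ p.support ∧ z ≠ u ∧ z ≠ v) :
    (G.induce {x | x ∈ p.support ∧ x ≠ u ∧ x ≠ v}).Connected := by
  cases p with
  | nil => exact absurd rfl huv
  | cons h q =>
    rename_i u₂
    have hq : q.IsPath := hp.of_cons
    have hu : u ∉ q.support := ((Walk.cons_isPath_iff h q).mp hp).2
    by_cases hu₂ : u₂ = v
    · subst hu₂
      have : q = Walk.nil := by rwa [Walk.isPath_iff_eq_nil] at hq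
      subst this
      obtain ⟨z, hz, hzu, hzv⟩ := hne
      simp only [Walk.support_cons, Walk.support_nil, List.mem_cons, List.mem_singleton] at hz
      rcases hz with rfl | rfl | h'
      · exact absurd rfl hzu
      · exact absurd rfl hzv
      · simp at h'
    · have hset : {x | x ∈ (Walk.cons h q).support ∧ x ≠ u ∧ x ≠ v} =
          {x | x ∈ q.support ∧ x ≠ v} := by
        ext t
        simp only [Walk.support_cons, List.mem_cons, Set.mem_setOf_eq]
        constructor
        · rintro ⟨ht | ht, hn1, hn2⟩
          · exact absurd ht hn1
          · exact ⟨ht, hn2⟩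
        · rintro ⟨ht, hn⟩
          exact ⟨Or.inr ht, fun hh => hu (hh ▸ ht), hn⟩
      rw [hset]
      exact conn_drop_last q hq hu₂

lemma two_le_length_of_interior {u v z : V} (p : G.Walk u v) (hz : z ∈ p.support)
    (hzu : z ≠ u) (hzv : z ≠ v) : 2 ≤ p.length := by
  cases p with
  | nil => simp at hz; exact absurd hz hzu
  | cons h q =>
    cases q with
    | nil =>
      simp only [Walk.support_cons, Walk.support_nil, List.mem_cons, List.mem_singleton] at hz
      rcases hz with rfl | rfl | h'
      · exact absurd rfl hzu
      · exact absurd rfl hzv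
      · simp at h'
    | cons h' q' => simp [Walk.length_cons]

lemma exists_adj_start {u v : V} (p : G.Walk u v) (hp : p.IsPath) (huv : u ≠ v) :
    ∃ t, t ∈ p.support ∧ t ≠ u ∧ G.Adj u t := by
  cases p with
  | nil => exact absurd rfl huv
  | cons h q =>
    exact ⟨_, by simp [Walk.support_cons, q.start_mem_support], h.ne', h⟩

lemma exists_adj_interior {u v : V} (p : G.Walk u v) (hp : p.IsPath) (h2 : 2 ≤ p.length) :
    ∃ t, t ∈ p.support ∧ t ≠ u ∧ t ≠ v ∧ G.Adj u t := by
  cases p with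
  | nil => simp at h2
  | cons h q =>
    rename_i u₂
    refine ⟨u₂, by simp [Walk.support_cons, q.start_mem_support], h.ne', ?_, h⟩
    rintro rfl
    have hq : q.IsPath := hp.of_cons
    rw [Walk.isPath_iff_eq_nil] at hq
    subst hq
    simp at h2

lemma edge_of_no_interior {u v : V} (p : G.Walk u v) (hp : p.IsPath) (huv : u ≠ v)
    (hint : ∀ t ∈ p.support, t = u ∨ t = v) : p.length = 1 ∧ s(u, v) ∈ p.edges := by
  cases p with
  | nil => exact absurd rfl huv
  | cons h q =>
    rename_i u₂
    rcases hint u₂ (by simp [q.start_mem_support]) with h' | h'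
    · exact absurd h'.symm h.ne
    · subst h'
      have hq : q.IsPath := hp.of_cons
      rw [Walk.isPath_iff_eq_nil] at hq
      subst hq
      simp

lemma edge_not_mem_of_path {u v : V} (p : G.Walk u v) (hp : p.IsPath) (h2 : 2 ≤ p.length) :
    s(u, v) ∉ p.edges := by
  cases p with
  | nil => simp
  | cons h q =>
    rename_i u₂
    intro hmem
    rw [Walk.edges_cons, List.mem_cons] at hmem
    rcases hmem with heq | hmem
    · have : v = u₂ := Sym2.congr_right.mp heq
      subst this
      have hq : q.IsPath := hp.of_cons
      rw [Walk.isPath_iff_eq_nil] at hq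
      subst hq
      simp at h2
    · exact ((Walk.cons_isPath_iff h q).mp hp).2 (q.fst_mem_support_of_mem_edges hmem)


lemma exists_first_hit (S : Set V) : ∀ {w v : V} (p : G.Walk w v), v ∈ S →
    ∃ (x : V) (q : G.Walk w x), x ∈ S ∧ q.IsPath ∧ (∀ z ∈ q.support, z ∈ S → z = x) ∧
      (∀ z ∈ q.support, z ∈ p.support)
  | w, _, Walk.nil, hv => ⟨w, Walk.nil, hv, Walk.IsPath.nil, by simp +contextual, by simp⟩
  | w, v, Walk.cons h p, hv => by
    by_cases hw : w ∈ S
    · exact ⟨w, Walk.nil, hw, Walk.IsPath.nil, by simp +contextual, by simp⟩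
    · obtain ⟨x, q, hxS, hq, hfirst, hsub⟩ := exists_first_hit S p hv
      refine ⟨x, (Walk.cons h q).bypass, hxS, Walk.bypass_isPath _, ?_, ?_⟩
      · intro z hz hzS
        have hz' := (Walk.cons h q).support_bypass_subset hz
        rw [Walk.support_cons, List.mem_cons] at hz'
        rcases hz' with rfl | hz'
        · exact absurd hzS hw
        · exact hfirst z hz' hzS
      · intro z hz
        have hz' := (Walk.cons h q).support_bypass_subset hz
        rw [Walk.support_cons, List.mem_cons] at hz' ⊢
        exact hz'.imp id (hsub z)

lemma mem_take_drop_eq {u v a : V} (p : G.Walk u v) (hp : p.IsPath) (ha : a ∈ p.support) {z : V}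
    (h1 : z ∈ (p.takeUntil a ha).support) (h2 : z ∈ (p.dropUntil a ha).support) : z = a := by
  have hnodup : p.support.Nodup := hp.support_nodup
  rw [← p.take_spec ha, Walk.support_append, List.nodup_append] at hnodup
  have hdrop := (p.dropUntil a ha).support_eq_cons
  rw [hdrop, List.mem_cons] at h2
  rcases h2 with rfl | h2
  · rfl
  · exact absurd rfl (hnodup.2.2 z h1 z h2)

lemma cycle_split {x y : V} (d : G.Walk x x) (hd : d.IsCycle) (hy : y ∈ d.support) (hyx : y ≠ x) :
    (d.takeUntil y hy).IsPath ∧ (d.dropUntil y hy).IsPath ∧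
      ∀ z, z ∈ (d.takeUntil y hy).support → z ∈ (d.dropUntil y hy).support →
        z = x ∨ z = y := by
  set A := d.takeUntil y hy with hA_def
  set B := d.dropUntil y hy with hB_def
  have hspec : A.append B = d := d.take_spec hy
  have hsupp : d.support = A.support ++ B.support.tail := by
    rw [← hspec, Walk.support_append]
  have hA : A.support = x :: A.support.tail := A.support_eq_cons
  have hB : B.support = y :: B.support.tail := B.support_eq_cons
  have htail : d.support.tail = A.support.tail ++ B.support.tail := by
    have h1 : d.support.tail = (A.support ++ B.support.tail).tail := by rw [← hsupp]
    rw [hA] at h1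
    simpa using h1
  have hnd : d.support.tail.Nodup := hd.support_nodup
  rw [htail, List.nodup_append] at hnd
  have hyA : y ∈ A.support.tail := by
    have := A.end_mem_support
    rw [hA, List.mem_cons] at this
    rcases this with h | h
    · exact absurd h hyx
    · exact h
  have hxB : x ∈ B.support.tail := by
    have := B.end_mem_support
    rw [hB, List.mem_cons] at this
    rcases this with h | h
    · exact absurd h.symm hyx
    · exact h
  refine ⟨?_, ?_, ?_⟩
  · apply Walk.IsPath.mk'
    rw [hA, List.nodup_cons]
    exact ⟨fun hx' => hnd.2.2 _ hx' _ hxB rfl, hnd.1⟩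
  · apply Walk.IsPath.mk'
    rw [hB, List.nodup_cons]
    exact ⟨fun hy' => hnd.2.2 _ hyA _ hy' rfl, hnd.2.1⟩
  · intro z hz1 hz2
    rw [hA, List.mem_cons] at hz1
    rw [hB, List.mem_cons] at hz2
    rcases hz1 with rfl | hz1
    · exact Or.inl rfl
    · rcases hz2 with rfl | hz2
      · exact Or.inr rfl
      · exact absurd rfl (hnd.2.2 _ hz1 _ hz2)

lemma cycle_of_append {x y : V} (p : G.Walk x y) (q : G.Walk y x) (hp : p.IsPath) (hq : q.IsPath)
    (h2 : 2 ≤ p.length)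
    (hmeet : ∀ z, z ∈ p.support → z ∈ q.support → z = x ∨ z = y) :
    (p.append q).IsCycle := by
  have hxy : x ≠ y := by
    rintro rfl
    rw [Walk.isPath_iff_eq_nil] at hp
    subst hp
    simp at h2
  refine ⟨⟨⟨?_⟩, ?_⟩, ?_⟩
  · -- edges nodup
    rw [Walk.edges_append, List.nodup_append]
    refine ⟨hp.isTrail.edges_nodup, hq.isTrail.edges_nodup, ?_⟩
    intro e he1 e' he2 hee
    subst hee
    induction e using Sym2.ind with
    | _ c d =>
      have hc1 := p.fst_mem_support_of_mem_edges he1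
      have hd1 := p.snd_mem_support_of_mem_edges he1
      have hc2 := q.fst_mem_support_of_mem_edges he2
      have hd2 := q.snd_mem_support_of_mem_edges he2
      have hcd : c ≠ d := (p.adj_of_mem_edges he1).ne
      have hexy : s(c, d) = s(x, y) := by
        rcases hmeet c hc1 hc2 with rfl | rfl
        · rcases hmeet d hd1 hd2 with rfl | rfl
          · exact absurd rfl hcd
          · rfl
        · rcases hmeet d hd1 hd2 with rfl | rfl
          · exact Sym2.eq_swap
          · exact absurd rfl hcd
      rw [hexy] at he1
      exact edge_not_mem_of_path p hp h2 he1
  · -- ne nil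
    intro hnil
    have : (p.append q).length = 0 := by rw [hnil]; rfl
    rw [Walk.length_append] at this
    omega
  · -- support tail nodup
    have hps : p.support = x :: p.support.tail := p.support_eq_cons
    have hqs : q.support = y :: q.support.tail := q.support_eq_cons
    have htail : (p.append q).support.tail = p.support.tail ++ q.support.tail := by
      rw [Walk.support_append, hps]
      simp
    rw [htail, List.nodup_append]
    have hpn := hp.support_nodup
    have hqn := hq.support_nodup
    rw [hps, List.nodup_cons] at hpn
    rw [hqs, List.nodup_cons] at hqn
    refine ⟨hpn.2, hqn.2, ?_⟩
    intro z hz1 z' hz2 hzz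
    subst hzz
    have hz1' : z ∈ p.support := by rw [hps]; exact List.mem_cons_of_mem _ hz1
    have hz2' : z ∈ q.support := by rw [hqs]; exact List.mem_cons_of_mem _ hz2
    rcases hmeet z hz1' hz2' with rfl | rfl
    · exact hpn.1 hz1
    · exact hqn.1 hz2


lemma ham_of_cycle_of_spanning {v : V} {c : G.Walk v v} (hc : c.IsCycle)
    (hall : ∀ w, w ∈ c.support) : c.IsHamiltonianCycle := by
  rw [Walk.isHamiltonianCycle_isCycle_and_isHamiltonian_tail]
  refine ⟨hc, fun a => ?_⟩
  rw [Walk.support_tail_of_not_nil c hc.not_nil]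
  apply List.count_eq_one_of_mem hc.support_nodup
  have ha := hall a
  rw [c.support_eq_cons, List.mem_cons] at ha
  rcases ha with rfl | ha
  · cases c with
    | nil => exact absurd rfl hc.ne_nil
    | cons h q =>
      simp only [Walk.support_cons, List.tail_cons]
      exact q.end_mem_support
  · exact ha

lemma eq_cons_of_edge_start {x u y : V} (p : G.Walk x u) (hp : p.IsPath) (he : s(x, y) ∈ p.edges)
    (hxy : x ≠ y) : ∃ (h : G.Adj x y) (q : G.Walk y u), p = Walk.cons h q := by
  cases p with
  | nil => simp at he
  | cons h q =>
    rename_i u₂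
    rw [Walk.edges_cons, List.mem_cons] at he
    rcases he with he | he
    · have : y = u₂ := Sym2.congr_right.mp he
      subst this
      exact ⟨h, q, rfl⟩
    · exact absurd (q.fst_mem_support_of_mem_edges he) ((Walk.cons_isPath_iff h q).mp hp).2

lemma exists_spanning_path_of_edge {x y : V} (hxy : x ≠ y) (d : G.Walk x x) (hd : d.IsCycle)
    (hall : ∀ w, w ∈ d.support) (he : s(x, y) ∈ d.edges) :
    ∃ t : G.Walk y x, t.IsPath ∧ ∀ w, w ∈ t.support := by
  cases d with
  | nil => simp at he
  | cons h t0 =>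
    rename_i u₂
    have ht0path : t0.IsPath := by
      apply Walk.IsPath.mk'
      have := hd.support_nodup
      simpa using this
    rw [Walk.edges_cons, List.mem_cons] at he
    rcases he with he | he
    · have hyu : y = u₂ := Sym2.congr_right.mp he
      subst hyu
      refine ⟨t0, ht0path, fun w => ?_⟩
      have hw := hall w
      rw [Walk.support_cons, List.mem_cons] at hw
      rcases hw with rfl | h'
      · exact t0.end_mem_support
      · exact h'
    · have he' : s(x, y) ∈ t0.reverse.edges := by
        rw [Walk.edges_reverse, List.mem_reverse]; exact he
      obtain ⟨hadj, q, hq⟩ := eq_cons_of_edge_start t0.reverse ht0path.reverse he' hxy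
      have hqn : q.support.Nodup ∧ x ∉ q.support := by
        have hnd := ht0path.reverse.support_nodup
        rw [hq, Walk.support_cons, List.nodup_cons] at hnd
        exact ⟨hnd.2, hnd.1⟩
      have hsupp : (q.append (Walk.cons h.symm Walk.nil)).support = q.support ++ [x] := by
        rw [Walk.support_append]
        rfl
      refine ⟨q.append (Walk.cons h.symm Walk.nil), ?_, ?_⟩
      · apply Walk.IsPath.mk'
        rw [hsupp, List.nodup_append]
        refine ⟨hqn.1, List.nodup_singleton x, ?_⟩
        intro z hz1 z' hz2 hzz
        rw [List.mem_singleton] at hz2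
        subst hz2
        subst hzz
        exact hqn.2 hz1
      · intro w
        rw [hsupp, List.mem_append]
        by_cases hwx : w = x
        · right; simp [hwx]
        · left
          have hw := hall w
          rw [Walk.support_cons, List.mem_cons] at hw
          rcases hw with rfl | h'
          · exact absurd rfl hwx
          · have : w ∈ t0.reverse.support := by
              rw [Walk.support_reverse, List.mem_reverse]; exact h'
            rw [hq, Walk.support_cons, List.mem_cons] at this
            rcases this with rfl | h''
            · exact absurd rfl hwx
            · exact h''

lemma chain_cross {P Q : Set V} (hPQ : ∀ t, t ∈ P → t ∈ Q → False) :
    ∀ (l : List V), l.Chain' G.Adj → (∀ t ∈ l, t ∈ P ∨ t ∈ Q) →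
      ∀ a, a ∈ l → a ∈ P → ∀ b, b ∈ l → b ∈ Q →
      ∃ p ∈ P, ∃ q ∈ Q, G.Adj p q
  | [], _, _, a, ha, _, _, _, _ => absurd ha List.not_mem_nil
  | [c], _, _, a, ha, haP, b, hb, hbQ => by
    rw [List.mem_singleton] at ha hb
    subst ha; subst hb
    exact absurd hbQ (fun h => hPQ _ haP h)
  | c :: u :: t, hchain, hmem, a, ha, haP, b, hb, hbQ => by
    have hadj : G.Adj c u := (List.isChain_cons_cons.mp hchain).1
    have hchain' : (u :: t).Chain' G.Adj := (List.isChain_cons_cons.mp hchain).2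
    have hmem' : ∀ z ∈ u :: t, z ∈ P ∨ z ∈ Q := fun z hz => hmem z (List.mem_cons_of_mem _ hz)
    by_cases hcP : c ∈ P
    · by_cases huQ : u ∈ Q
      · exact ⟨c, hcP, u, huQ, hadj⟩
      · have huP : u ∈ P := (hmem u (by simp)).resolve_right huQ
        have hb' : b ∈ u :: t := by
          rcases List.mem_cons.mp hb with rfl | h
          · exact absurd hbQ (fun h => hPQ _ hcP h)
          · exact h
        exact chain_cross hPQ (u :: t) hchain' hmem' u (by simp) huP b hb' hbQ
    · have hcQ : c ∈ Q := (hmem c (by simp)).resolve_left hcP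
      by_cases huP : u ∈ P
      · exact ⟨u, huP, c, hcQ, hadj.symm⟩
      · have huQ : u ∈ Q := (hmem u (by simp)).resolve_left huP
        have ha' : a ∈ u :: t := by
          rcases List.mem_cons.mp ha with rfl | h
          · exact absurd haP hcP
          · exact h
        exact chain_cross hPQ (u :: t) hchain' hmem' a ha' haP u (by simp) huQ


lemma exch {P Q : Set V} : (∃ a ∈ P, ∃ b ∈ Q, G.Adj a b) → ∃ a ∈ Q, ∃ b ∈ P, G.Adj a b :=
  fun ⟨a, ha, b, hb, h⟩ => ⟨b, hb, a, ha, h.symm⟩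

lemma hasMinor_K4 (S1 S2 S3 S4 : Set V)
    (h1 : S1.Nonempty) (h2 : S2.Nonempty) (h3 : S3.Nonempty) (h4 : S4.Nonempty)
    (hc1 : (G.induce S1).Connected) (hc2 : (G.induce S2).Connected)
    (hc3 : (G.induce S3).Connected) (hc4 : (G.induce S4).Connected)
    (d12 : Disjoint S1 S2) (d13 : Disjoint S1 S3) (d14 : Disjoint S1 S4)
    (d23 : Disjoint S2 S3) (d24 : Disjoint S2 S4) (d34 : Disjoint S3 S4)
    (e12 : ∃ a ∈ S1, ∃ b ∈ S2, G.Adj a b) (e13 : ∃ a ∈ S1, ∃ b ∈ S3, G.Adj a b)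
    (e14 : ∃ a ∈ S1, ∃ b ∈ S4, G.Adj a b) (e23 : ∃ a ∈ S2, ∃ b ∈ S3, G.Adj a b)
    (e24 : ∃ a ∈ S2, ∃ b ∈ S4, G.Adj a b) (e34 : ∃ a ∈ S3, ∃ b ∈ S4, G.Adj a b) :
    HasMinor G (completeGraph (Fin 4)) := by
  have e21 := exch e12; have e31 := exch e13; have e41 := exch e14
  have e32 := exch e23; have e42 := exch e24; have e43 := exch e34
  have d21 := d12.symm; have d31 := d13.symm; have d41 := d14.symm
  have d32 := d23.symm; have d42 := d24.symm; have d43 := d34.symm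
  refine ⟨fun i => if i = 0 then S1 else if i = 1 then S2 else if i = 2 then S3 else S4,
    ?_, ?_, ?_, ?_⟩
  · intro i; fin_cases i <;> simp only [reduceIte] <;> assumption
  · intro i; fin_cases i <;> simp only [reduceIte] <;> assumption
  · intro i j hij
    fin_cases i <;> fin_cases j <;> simp only [reduceIte] <;>
      first
        | exact absurd rfl hij
        | assumption
  · intro a b hab
    have hne : a ≠ b := by simpa [completeGraph] using hab
    fin_cases a <;> fin_cases b <;> simp only [reduceIte] <;>
      first
        | exact absurd rfl hne
        | assumption

lemma hasMinor_K23 (x y : V) (hxy : x ≠ y) (B1 B2 B3 : Set V)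
    (h1 : B1.Nonempty) (h2 : B2.Nonempty) (h3 : B3.Nonempty)
    (hc1 : (G.induce B1).Connected) (hc2 : (G.induce B2).Connected)
    (hc3 : (G.induce B3).Connected)
    (hx1 : x ∉ B1) (hx2 : x ∉ B2) (hx3 : x ∉ B3)
    (hy1 : y ∉ B1) (hy2 : y ∉ B2) (hy3 : y ∉ B3)
    (d12 : Disjoint B1 B2) (d13 : Disjoint B1 B3) (d23 : Disjoint B2 B3)
    (ex1 : ∃ t ∈ B1, G.Adj x t) (ex2 : ∃ t ∈ B2, G.Adj x t) (ex3 : ∃ t ∈ B3, G.Adj x t)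
    (ey1 : ∃ t ∈ B1, G.Adj y t) (ey2 : ∃ t ∈ B2, G.Adj y t) (ey3 : ∃ t ∈ B3, G.Adj y t) :
    HasMinor G (completeBipartiteGraph (Fin 2) (Fin 3)) := by
  have dx1 : Disjoint ({x} : Set V) B1 := Set.disjoint_singleton_left.mpr hx1
  have dx2 : Disjoint ({x} : Set V) B2 := Set.disjoint_singleton_left.mpr hx2
  have dx3 : Disjoint ({x} : Set V) B3 := Set.disjoint_singleton_left.mpr hx3
  have dy1 : Disjoint ({y} : Set V) B1 := Set.disjoint_singleton_left.mpr hy1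
  have dy2 : Disjoint ({y} : Set V) B2 := Set.disjoint_singleton_left.mpr hy2
  have dy3 : Disjoint ({y} : Set V) B3 := Set.disjoint_singleton_left.mpr hy3
  have dxy : Disjoint ({x} : Set V) {y} := by
    rw [Set.disjoint_singleton_left]; simpa using hxy
  have d21 := d12.symm; have d31 := d13.symm; have d32 := d23.symm
  have dx1' := dx1.symm; have dx2' := dx2.symm; have dx3' := dx3.symm
  have dy1' := dy1.symm; have dy2' := dy2.symm; have dy3' := dy3.symm
  have dxy' := dxy.symm
  have hcx : (G.induce ({x} : Set V)).Connected := induce_singleton_connected x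
  have hcy : (G.induce ({y} : Set V)).Connected := induce_singleton_connected y
  have hnx : ({x} : Set V).Nonempty := Set.singleton_nonempty x
  have hny : ({y} : Set V).Nonempty := Set.singleton_nonempty y
  refine ⟨Sum.elim (fun i => if i = 0 then {x} else {y})
    (fun j => if j = 0 then B1 else if j = 1 then B2 else B3), ?_, ?_, ?_, ?_⟩
  · rintro (i | j)
    · fin_cases i <;> simp only [Sum.elim_inl, reduceIte] <;> assumption
    · fin_cases j <;> simp only [Sum.elim_inr, reduceIte] <;> assumption
  · rintro (i | j)
    · fin_cases i <;> simp only [Sum.elim_inl, reduceIte] <;> assumption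
    · fin_cases j <;> simp only [Sum.elim_inr, reduceIte] <;> assumption
  · rintro (i | j) (i' | j') hne <;>
      [skip; skip; skip; skip] <;>
      first
        | (fin_cases i <;> fin_cases i' <;>
            simp only [Sum.elim_inl, Sum.elim_inr, reduceIte] <;>
            first
              | exact absurd rfl hne
              | assumption)
        | (fin_cases i <;> fin_cases j' <;>
            simp only [Sum.elim_inl, Sum.elim_inr, reduceIte] <;> assumption)
        | (fin_cases j <;> fin_cases i' <;>
            simp only [Sum.elim_inl, Sum.elim_inr, reduceIte] <;> assumption)
        | (fin_cases j <;> fin_cases j' <;>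
            simp only [Sum.elim_inl, Sum.elim_inr, reduceIte] <;>
            first
              | exact absurd rfl hne
              | assumption)
  · rintro (i | j) (i' | j') hab
    · simp [completeBipartiteGraph] at hab
    · obtain ⟨t1, ht1, ha1⟩ := ex1
      obtain ⟨t2, ht2, ha2⟩ := ex2
      obtain ⟨t3, ht3, ha3⟩ := ex3
      obtain ⟨s1, hs1, hb1⟩ := ey1
      obtain ⟨s2, hs2, hb2⟩ := ey2
      obtain ⟨s3, hs3, hb3⟩ := ey3
      fin_cases i <;> fin_cases j' <;>
        simp only [Sum.elim_inl, Sum.elim_inr, reduceIte]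
      · exact ⟨x, Set.mem_singleton x, t1, ht1, ha1⟩
      · exact ⟨x, Set.mem_singleton x, t2, ht2, ha2⟩
      · exact ⟨x, Set.mem_singleton x, t3, ht3, ha3⟩
      · exact ⟨y, Set.mem_singleton y, s1, hs1, hb1⟩
      · exact ⟨y, Set.mem_singleton y, s2, hs2, hb2⟩
      · exact ⟨y, Set.mem_singleton y, s3, hs3, hb3⟩
    · obtain ⟨t1, ht1, ha1⟩ := ex1
      obtain ⟨t2, ht2, ha2⟩ := ex2
      obtain ⟨t3, ht3, ha3⟩ := ex3
      obtain ⟨s1, hs1, hb1⟩ := ey1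
      obtain ⟨s2, hs2, hb2⟩ := ey2
      obtain ⟨s3, hs3, hb3⟩ := ey3
      fin_cases j <;> fin_cases i' <;>
        simp only [Sum.elim_inl, Sum.elim_inr, reduceIte]
      · exact ⟨t1, ht1, x, Set.mem_singleton x, ha1.symm⟩
      · exact ⟨s1, hs1, y, Set.mem_singleton y, hb1.symm⟩
      · exact ⟨t2, ht2, x, Set.mem_singleton x, ha2.symm⟩
      · exact ⟨s2, hs2, y, Set.mem_singleton y, hb2.symm⟩
      · exact ⟨t3, ht3, x, Set.mem_singleton x, ha3.symm⟩
      · exact ⟨s3, hs3, y, Set.mem_singleton y, hb3.symm⟩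
    · simp [completeBipartiteGraph] at hab


lemma start_cases {W : Type*} {H : SimpleGraph W} :
    ∀ {a c : W} (_ : H.Walk a c), a = c ∨ ∃ z, H.Adj a z
  | _, _, Walk.nil => Or.inl rfl
  | _, _, Walk.cons h _ => Or.inr ⟨_, h⟩

lemma card_cc_of_connected {W : Type*} {H : SimpleGraph W} (h : H.Connected) :
    Nat.card H.ConnectedComponent = 1 := by
  rw [Nat.card_eq_one_iff_unique]
  refine ⟨⟨fun a b => ?_⟩, ⟨SimpleGraph.connectedComponentMk _ h.nonempty.some⟩⟩
  induction a using SimpleGraph.ConnectedComponent.ind with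
  | _ u =>
  induction b using SimpleGraph.ConnectedComponent.ind with
  | _ w =>
  exact SimpleGraph.ConnectedComponent.sound (h.preconnected u w)

lemma connected_of_cc_le_one {W : Type*} [Finite W] {H : SimpleGraph W} (hne : Nonempty W)
    (h : Nat.card H.ConnectedComponent ≤ 1) : H.Connected := by
  have hfin : Finite H.ConnectedComponent := Quot.finite _
  have hpos : 0 < Nat.card H.ConnectedComponent := by
    have : Nonempty H.ConnectedComponent := ⟨SimpleGraph.connectedComponentMk _ hne.some⟩
    exact Nat.card_pos
  have h1 : Nat.card H.ConnectedComponent = 1 := by omega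
  rw [Nat.card_eq_one_iff_unique] at h1
  have hsub := h1.1
  haveI := hne
  refine ⟨fun a b => ?_⟩
  exact SimpleGraph.ConnectedComponent.exact
    (Subsingleton.elim (SimpleGraph.connectedComponentMk H a)
      (SimpleGraph.connectedComponentMk H b))

lemma induce_compl_connected (hbc : Biconnected G) (v : V) :
    (G.induce {w | w ≠ v}).Connected := by
  obtain ⟨hconn, hcard, hcut⟩ := hbc
  have h1 : Nat.card G.ConnectedComponent = 1 := card_cc_of_connected hconn
  have hle : Nat.card (G.induce {w | w ≠ v}).ConnectedComponent ≤ 1 := by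
    have h2 := hcut v
    unfold IsCutVertex at h2
    omega
  have hnt : Nontrivial V := by
    have h3 : 1 < Nat.card V := by omega
    exact Finite.one_lt_card_iff_nontrivial.mp h3
  obtain ⟨w, hw⟩ := exists_ne v
  exact connected_of_cc_le_one ⟨⟨w, hw⟩⟩ hle

lemma two_le_degree (hbc : Biconnected G) [DecidableRel G.Adj] (u : V) :
    2 ≤ G.degree u := by
  have hnt : Nontrivial V := by
    have h3 : 1 < Nat.card V := by have := hbc.2.1; omega
    exact Finite.one_lt_card_iff_nontrivial.mp h3
  obtain ⟨w, hw⟩ := exists_ne u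
  obtain ⟨p⟩ := hbc.1.preconnected u w
  obtain heq | ⟨a, ha⟩ := start_cases p
  · exact absurd heq hw.symm
  have hpos : 0 < G.degree u := by
    rw [← SimpleGraph.mem_neighborFinset] at ha
    exact Finset.card_pos.mpr ⟨a, ha⟩
  by_contra hlt
  push_neg at hlt
  have hdeg : G.degree u = 1 := by omega
  rw [SimpleGraph.degree, Finset.card_eq_one] at hdeg
  obtain ⟨b, hb⟩ := hdeg
  have hub : G.Adj u b := by
    rw [← SimpleGraph.mem_neighborFinset, hb]
    exact Finset.mem_singleton_self b
  have honly : ∀ z, G.Adj u z → z = b := by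
    intro z hz
    rw [← SimpleGraph.mem_neighborFinset, hb, Finset.mem_singleton] at hz
    exact hz
  have hcard3 : 3 ≤ Fintype.card V := by
    have := hbc.2.1; rwa [Nat.card_eq_fintype_card] at this
  obtain ⟨w₀, hw₀u, hw₀b⟩ : ∃ w₀, w₀ ≠ u ∧ w₀ ≠ b := by
    by_contra hno
    push_neg at hno
    have hsub : (Finset.univ : Finset V) ⊆ {u, b} := by
      intro z _
      rcases eq_or_ne z u with rfl | hz
      · simp
      · simp [hno z hz]
    have hle2 := Finset.card_le_card hsub
    rw [Finset.card_univ] at hle2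
    have : ({u, b} : Finset V).card ≤ 2 := by
      apply le_trans (Finset.card_insert_le u {b})
      simp
    omega
  apply hbc.2.2 b
  unfold IsCutVertex
  rw [card_cc_of_connected hbc.1]
  set H := G.induce {w | w ≠ b} with hH
  have hfin : Finite H.ConnectedComponent := Quot.finite _
  rw [Finite.one_lt_card_iff_nontrivial]
  refine ⟨SimpleGraph.connectedComponentMk H ⟨u, hub.ne⟩,
    SimpleGraph.connectedComponentMk H ⟨w₀, hw₀b⟩, fun heq => ?_⟩
  obtain ⟨q⟩ := SimpleGraph.ConnectedComponent.exact heq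
  obtain heq2 | ⟨z, hz⟩ := start_cases q
  · rw [Subtype.ext_iff] at heq2
    exact hw₀u (heq2.symm)
  · have hz' : G.Adj u (z : V) := hz
    have : (z : V) = b := honly _ hz'
    exact z.2 this

lemma exists_cycle (hbc : Biconnected G) : ∃ (v : V) (c : G.Walk v v), c.IsCycle := by
  classical
  by_contra h
  push_neg at h
  have hac : G.IsAcyclic := fun v c hc => h v c hc
  have htree : G.IsTree := ⟨hbc.1, hac⟩
  have hE := htree.card_edgeFinset
  have hdeg := G.sum_degrees_eq_twice_card_edges
  have hdeg2 : ∀ u : V, 2 ≤ G.degree u := two_le_degree hbc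
  have hsum : 2 * Fintype.card V ≤ ∑ v, G.degree v := by
    calc 2 * Fintype.card V = ∑ _v : V, 2 := by
          rw [Finset.sum_const, Finset.card_univ]; ring
    _ ≤ ∑ v, G.degree v := Finset.sum_le_sum fun i _ => hdeg2 i
  rw [hdeg] at hsum
  have hcV : 3 ≤ Fintype.card V := by
    have := hbc.2.1; rwa [Nat.card_eq_fintype_card] at this
  omega

lemma exists_max_cycle (h : ∃ (v : V) (c : G.Walk v v), c.IsCycle) :
    ∃ (v : V) (c : G.Walk v v), c.IsCycle ∧
      ∀ (w : V) (d : G.Walk w w), d.IsCycle → d.length ≤ c.length := by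
  set L := {k | ∃ (v : V) (c : G.Walk v v), c.IsCycle ∧ c.length = k} with hL
  have hub : ∀ k ∈ L, k ≤ Fintype.card V := by
    rintro k ⟨v, c, hc, rfl⟩
    have h1 : c.support.tail.Nodup := hc.support_nodup
    have h2 := h1.length_le_card
    rw [List.length_tail, c.length_support] at h2
    omega
  have hLne : L.Nonempty := by
    obtain ⟨v, c, hc⟩ := h
    exact ⟨c.length, v, c, hc, rfl⟩
  have hmem := Nat.sSup_mem hLne ⟨Fintype.card V, hub⟩
  obtain ⟨v, c, hc, hlen⟩ := hmem
  refine ⟨v, c, hc, fun w d hd => ?_⟩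
  rw [hlen]
  exact le_csSup ⟨Fintype.card V, hub⟩ ⟨w, d, hd, rfl⟩


lemma hasMinor_K4_of_chords {x y a b : V} (d : G.Walk x x) (hd : d.IsCycle)
    (hy : y ∈ d.support) (hyx : y ≠ x)
    (ha : a ∈ (d.takeUntil y hy).support) (hax : a ≠ x) (hay : a ≠ y)
    (hb : b ∈ (d.dropUntil y hy).support) (hbx : b ≠ x) (hby : b ≠ y)
    (hexy : G.Adj x y) (heab : G.Adj a b) :
    HasMinor G (completeGraph (Fin 4)) := by
  obtain ⟨hApath, hBpath, hmeet⟩ := cycle_split d hd hy hyx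
  set A := d.takeUntil y hy with hA_def
  set B := d.dropUntil y hy with hB_def
  set A1 := A.takeUntil a ha with hA1_def
  set A2 := A.dropUntil a ha with hA2_def
  set B1 := B.takeUntil b hb with hB1_def
  set B2 := B.dropUntil b hb with hB2_def
  have hA1path : A1.IsPath := hApath.takeUntil ha
  have hA2path : A2.IsPath := hApath.dropUntil ha
  have hB1path : B1.IsPath := hBpath.takeUntil hb
  have hB2path : B2.IsPath := hBpath.dropUntil hb
  have hA1sub : ∀ z ∈ A1.support, z ∈ A.support := fun z hz => A.support_takeUntil_subset ha hz
  have hA2sub : ∀ z ∈ A2.support, z ∈ A.support := fun z hz => A.support_dropUntil_subset ha hz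
  have hB1sub : ∀ z ∈ B1.support, z ∈ B.support := fun z hz => B.support_takeUntil_subset hb hz
  have hB2sub : ∀ z ∈ B2.support, z ∈ B.support := fun z hz => B.support_dropUntil_subset hb hz
  have KA : ∀ z, z ∈ A1.support → z ∈ A2.support → z = a :=
    fun z h1 h2 => mem_take_drop_eq A hApath ha h1 h2
  have KB : ∀ z, z ∈ B1.support → z ∈ B2.support → z = b :=
    fun z h1 h2 => mem_take_drop_eq B hBpath hb h1 h2
  -- basic exclusions
  have hyA1 : y ∉ A1.support := fun h => hay.symm (KA y h A2.end_mem_support)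
  have hxA2 : x ∉ A2.support := fun h => hax.symm (KA x A1.start_mem_support h)
  have hxB1 : x ∉ B1.support := fun h => hbx.symm (KB x h B2.end_mem_support)
  have hyB2 : y ∉ B2.support := fun h => hby.symm (KB y B1.start_mem_support h)
  set S1 := {t | t ∈ A1.support ∧ t ≠ a} with hS1
  set S2 := {t | t ∈ A2.support ∧ t ≠ y} with hS2
  set S3 := {t | t ∈ B1.support ∧ t ≠ b} with hS3
  set S4 := {t | t ∈ B2.support ∧ t ≠ x} with hS4
  have hxa : x ≠ a := fun h => hax h.symm
  have hay' : a ≠ y := hay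
  have hyb : y ≠ b := fun h => hby h.symm
  have hbx' : b ≠ x := hbx
  apply hasMinor_K4 S1 S2 S3 S4
  · exact ⟨x, A1.start_mem_support, hxa⟩
  · exact ⟨a, A2.start_mem_support, hay'⟩
  · exact ⟨y, B1.start_mem_support, hyb⟩
  · exact ⟨b, B2.start_mem_support, hbx'⟩
  · exact conn_drop_last A1 hA1path hxa
  · exact conn_drop_last A2 hA2path hay'
  · exact conn_drop_last B1 hB1path hyb
  · exact conn_drop_last B2 hB2path hbx'
  · -- S1 S2
    rw [Set.disjoint_left]
    rintro z ⟨hz1, hza⟩ ⟨hz2, _⟩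
    exact hza (KA z hz1 hz2)
  · -- S1 S3
    rw [Set.disjoint_left]
    rintro z ⟨hz1, hza⟩ ⟨hz3, hzb⟩
    rcases hmeet z (hA1sub z hz1) (hB1sub z hz3) with rfl | rfl
    · exact hxB1 hz3
    · exact hyA1 hz1
  · -- S1 S4
    rw [Set.disjoint_left]
    rintro z ⟨hz1, hza⟩ ⟨hz4, hzx⟩
    rcases hmeet z (hA1sub z hz1) (hB2sub z hz4) with rfl | rfl
    · exact hzx rfl
    · exact hyA1 hz1
  · -- S2 S3
    rw [Set.disjoint_left]
    rintro z ⟨hz2, hzy⟩ ⟨hz3, hzb⟩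
    rcases hmeet z (hA2sub z hz2) (hB1sub z hz3) with rfl | rfl
    · exact hxA2 hz2
    · exact hzy rfl
  · -- S2 S4
    rw [Set.disjoint_left]
    rintro z ⟨hz2, hzy⟩ ⟨hz4, hzx⟩
    rcases hmeet z (hA2sub z hz2) (hB2sub z hz4) with rfl | rfl
    · exact hzx rfl
    · exact hzy rfl
  · -- S3 S4
    rw [Set.disjoint_left]
    rintro z ⟨hz3, hzb⟩ ⟨hz4, _⟩
    exact hzb (KB z hz3 hz4)
  · -- e12 : S1 - S2 via last edge of A1
    obtain ⟨t, ht, hta, hadj⟩ := exists_adj_start A1.reverse hA1path.reverse hax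
    have ht' : t ∈ A1.support := by rwa [Walk.support_reverse, List.mem_reverse] at ht
    exact ⟨t, ⟨ht', hta⟩, a, ⟨A2.start_mem_support, hay'⟩, hadj.symm⟩
  · exact ⟨x, ⟨A1.start_mem_support, hxa⟩, y, ⟨B1.start_mem_support, hyb⟩, hexy⟩
  · -- e14 : S1 - S4 via first edge of B2.reverse
    obtain ⟨t, ht, htx, hadj⟩ := exists_adj_start B2.reverse hB2path.reverse (fun h => hbx h.symm)
    have ht' : t ∈ B2.support := by rwa [Walk.support_reverse, List.mem_reverse] at ht
    exact ⟨x, ⟨A1.start_mem_support, hxa⟩, t, ⟨ht', htx⟩, hadj⟩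
  · -- e23
    obtain ⟨t, ht, hty, hadj⟩ := exists_adj_start A2.reverse hA2path.reverse (fun h => hay h.symm)
    have ht' : t ∈ A2.support := by rwa [Walk.support_reverse, List.mem_reverse] at ht
    exact ⟨t, ⟨ht', hty⟩, y, ⟨B1.start_mem_support, hyb⟩, hadj.symm⟩
  · exact ⟨a, ⟨A2.start_mem_support, hay'⟩, b, ⟨B2.start_mem_support, hbx'⟩, heab⟩
  · -- e34
    obtain ⟨t, ht, htb, hadj⟩ := exists_adj_start B1.reverse hB1path.reverse hby
    have ht' : t ∈ B1.support := by rwa [Walk.support_reverse, List.mem_reverse] at ht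
    exact ⟨t, ⟨ht', htb⟩, b, ⟨B2.start_mem_support, hbx'⟩, hadj.symm⟩


def inducedHom (G : SimpleGraph V) (s : Set V) : G.induce s →g G :=
  ⟨Subtype.val, fun {a b} h => h⟩

lemma start_mem_support_tail {v : V} (c : G.Walk v v) (h : ¬c.Nil) : v ∈ c.support.tail := by
  cases c with
  | nil => simp at h
  | cons hadj q =>
    simp only [Walk.support_cons, List.tail_cons]
    exact q.end_mem_support

lemma exists_ham_cycle (hbc : Biconnected G)
    (hK23 : ¬ HasMinor G (completeBipartiteGraph (Fin 2) (Fin 3))) :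
    ∃ (v : V) (c : G.Walk v v), c.IsHamiltonianCycle := by
  obtain ⟨v, c, hc, hmax⟩ := exists_max_cycle (exists_cycle hbc)
  by_cases hall : ∀ w, w ∈ c.support
  · exact ⟨v, c, ham_of_cycle_of_spanning hc hall⟩
  push_neg at hall
  obtain ⟨w, hw⟩ := hall
  exfalso
  set S : Set V := {z | z ∈ c.support} with hS_def
  have hwS : w ∉ S := hw
  -- first path from w to the cycle
  obtain ⟨p⟩ := hbc.1.preconnected w v
  obtain ⟨x, q1, hxS, hq1path, hq1first, -⟩ := exists_first_hit S p c.start_mem_support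
  -- a second cycle vertex, distinct from x
  obtain ⟨y₀, hy₀S, hy₀x⟩ : ∃ y₀, y₀ ∈ c.support ∧ y₀ ≠ x := by
    have hnd := hc.support_nodup
    have hlen : 2 ≤ c.support.tail.length := by
      have h3 := hc.three_le_length
      have hl := c.length_support
      rw [List.length_tail, hl]
      omega
    rcases htl : c.support.tail with - | ⟨a, t⟩
    · rw [htl] at hlen; simp at hlen
    · rcases ht : t with - | ⟨b, t'⟩
      · rw [htl, ht] at hlen; simp at hlen
      · have hab : a ≠ b := by
          rw [htl, ht, List.nodup_cons] at hnd
          intro h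
          exact hnd.1 (h ▸ (List.mem_cons_self : b ∈ b :: t'))
        have haS : a ∈ c.support := by
          rw [c.support_eq_cons, htl]; simp
        have hbS : b ∈ c.support := by
          rw [c.support_eq_cons, htl, ht]; simp
        by_cases hax : a = x
        · exact ⟨b, hbS, fun h => hab (hax.trans h.symm)⟩
        · exact ⟨a, haS, hax⟩
  -- second path avoiding x
  have hwx : w ≠ x := fun h => hwS (h ▸ hxS)
  have hconnx := induce_compl_connected hbc x
  obtain ⟨pw⟩ := hconnx.preconnected ⟨w, hwx⟩ ⟨y₀, hy₀x⟩
  let q0 : G.Walk w y₀ := pw.map (inducedHom G {z | z ≠ x})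
  have hq0x : x ∉ q0.support := by
    intro hx0
    rw [show q0.support = _ from Walk.support_map _ _, List.mem_map] at hx0
    obtain ⟨z, hz, hzx⟩ := hx0
    exact z.2 hzx
  obtain ⟨y, q2, hyS, hq2path, hq2first, hq2sub⟩ := exists_first_hit S q0 hy₀S
  have hxq2 : x ∉ q2.support := fun h => hq0x (hq2sub x h)
  have hyx : y ≠ x := fun h => hxq2 (h ▸ q2.end_mem_support)
  have hxy : x ≠ y := fun h => hyx h.symm
  -- last common vertex of q2 with q1
  obtain ⟨z, r, hzT, hrpath, hrfirst, hrsub⟩ :=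
    exists_first_hit {t | t ∈ q1.support} q2.reverse
      (by simpa [Walk.support_reverse] using q1.start_mem_support)
  have hrsub' : ∀ t ∈ r.support, t ∈ q2.support := by
    intro t ht
    have := hrsub t ht
    rwa [Walk.support_reverse, List.mem_reverse] at this
  have hzq1 : z ∈ q1.support := hzT
  have hzS : z ∉ S := by
    intro h
    have hzx := hq1first z hzq1 h
    exact hxq2 (hzx ▸ hrsub' z r.end_mem_support)
  set s1 := q1.dropUntil z hzq1 with hs1_def
  have hs1path : s1.IsPath := hq1path.dropUntil hzq1
  have hs1sub : ∀ t ∈ s1.support, t ∈ q1.support := fun t ht =>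
    q1.support_dropUntil_subset hzq1 ht
  -- the outer path W from x to y through z
  set Wp := s1.reverse.append r.reverse with hWp_def
  have hWpath : Wp.IsPath := by
    apply Walk.IsPath.mk'
    rw [Walk.support_append, List.nodup_append]
    refine ⟨hs1path.reverse.support_nodup, hrpath.reverse.support_nodup.tail, ?_⟩
    intro t ht1 t' ht2 htt
    subst htt
    have ht1' : t ∈ s1.support := by rwa [Walk.support_reverse, List.mem_reverse] at ht1
    have ht2r : t ∈ r.reverse.support := List.mem_of_mem_tail ht2
    have ht2' : t ∈ r.support := by rwa [Walk.support_reverse, List.mem_reverse] at ht2r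
    have htz : t = z := hrfirst t ht2' (hs1sub t ht1')
    subst htz
    have : r.reverse.support = t :: r.reverse.support.tail := r.reverse.support_eq_cons
    have hnd := hrpath.reverse.support_nodup
    rw [this, List.nodup_cons] at hnd
    exact hnd.1 ht2
  have hWS : ∀ t ∈ Wp.support, t ∈ S → t = x ∨ t = y := by
    intro t ht htS
    rw [Walk.support_append, List.mem_append] at ht
    rcases ht with ht | ht
    · have ht' : t ∈ s1.support := by rwa [Walk.support_reverse, List.mem_reverse] at ht
      exact Or.inl (hq1first t (hs1sub t ht') htS)
    · have ht2r : t ∈ r.reverse.support := List.mem_of_mem_tail ht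
      have ht' : t ∈ r.support := by rwa [Walk.support_reverse, List.mem_reverse] at ht2r
      exact Or.inr (hq2first t (hrsub' t ht') htS)
  have hzW : z ∈ Wp.support := by
    rw [Walk.support_append, List.mem_append]
    left
    rw [Walk.support_reverse, List.mem_reverse]
    exact s1.start_mem_support
  have hzx : z ≠ x := fun h => hzS (h ▸ hxS)
  have hzy : z ≠ y := fun h => hzS (h ▸ hyS)
  have hW2 : 2 ≤ Wp.length := two_le_length_of_interior Wp hzW hzx hzy
  -- rotate the cycle to start at x
  have hxc : x ∈ c.support := hxS
  set c' := c.rotate x hxc with hc'_def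
  have hc'cyc : c'.IsCycle := hc.rotate hxc
  have hc'mem : ∀ t, t ∈ c'.support ↔ t ∈ c.support := by
    intro t
    have hrot := (c.support_rotate x hxc).mem_iff (a := t)
    constructor
    · intro ht
      rw [c'.support_eq_cons, List.mem_cons] at ht
      rcases ht with rfl | ht
      · exact hxc
      · exact List.mem_of_mem_tail (hrot.mp ht)
    · intro ht
      rw [c.support_eq_cons, List.mem_cons] at ht
      rcases ht with rfl | ht
      · exact List.mem_of_mem_tail (hrot.mpr (start_mem_support_tail c hc.not_nil))
      · exact List.mem_of_mem_tail (hrot.mpr ht)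
  have hyc' : y ∈ c'.support := (hc'mem y).mpr hyS
  obtain ⟨hApath, hBpath, hmeet⟩ := cycle_split c' hc'cyc hyc' hyx
  set A := c'.takeUntil y hyc' with hA_def
  set B := c'.dropUntil y hyc' with hB_def
  have hAS : ∀ t ∈ A.support, t ∈ S := fun t ht =>
    (hc'mem t).mp (c'.support_takeUntil_subset hyc' ht)
  have hBS : ∀ t ∈ B.support, t ∈ S := fun t ht =>
    (hc'mem t).mp (c'.support_dropUntil_subset hyc' ht)
  have hlenAB : A.length + B.length = c.length := by
    have hspec : A.append B = c' := c'.take_spec hyc'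
    have h1 : (A.append B).length = c'.length := by rw [hspec]
    rw [Walk.length_append] at h1
    have h2 : c'.length = c.length := by
      rw [hc'_def]
      show ((c.dropUntil x hxc).append (c.takeUntil x hxc)).length = c.length
      rw [Walk.length_append]
      have h3 : (c.takeUntil x hxc).length + (c.dropUntil x hxc).length = c.length := by
        rw [← Walk.length_append, c.take_spec hxc]
      omega
    omega
  by_cases hIA : ∃ t, t ∈ A.support ∧ t ≠ x ∧ t ≠ y
  · by_cases hIB : ∃ t, t ∈ B.support ∧ t ≠ y ∧ t ≠ x
    · -- K_{2,3} minor
      obtain ⟨a, haA, hax, hay⟩ := hIA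
      obtain ⟨b, hbB, hby, hbx⟩ := hIB
      apply hK23
      apply hasMinor_K23 x y hxy
        {t | t ∈ A.support ∧ t ≠ x ∧ t ≠ y}
        {t | t ∈ B.support ∧ t ≠ y ∧ t ≠ x}
        {t | t ∈ Wp.support ∧ t ≠ x ∧ t ≠ y}
      · exact ⟨a, haA, hax, hay⟩
      · exact ⟨b, hbB, hby, hbx⟩
      · exact ⟨z, hzW, hzx, hzy⟩
      · exact conn_interior A hApath hxy ⟨a, haA, hax, hay⟩
      · have := conn_interior B hBpath hyx ⟨b, hbB, hby, hbx⟩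
        have hset : {t | t ∈ B.support ∧ t ≠ y ∧ t ≠ x} =
            {x_1 | x_1 ∈ B.support ∧ x_1 ≠ y ∧ x_1 ≠ x} := rfl
        exact this
      · exact conn_interior Wp hWpath hxy ⟨z, hzW, hzx, hzy⟩
      · rintro ⟨-, h, -⟩; exact h rfl
      · rintro ⟨-, -, h⟩; exact h rfl
      · rintro ⟨-, h, -⟩; exact h rfl
      · rintro ⟨-, -, h⟩; exact h rfl
      · rintro ⟨-, h, -⟩; exact h rfl
      · rintro ⟨-, -, h⟩; exact h rfl
      · -- disjoint IA IB
        rw [Set.disjoint_left]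
        rintro t ⟨ht1, htx, hty⟩ ⟨ht2, -, -⟩
        rcases hmeet t ht1 ht2 with rfl | rfl
        · exact htx rfl
        · exact hty rfl
      · -- disjoint IA BW
        rw [Set.disjoint_left]
        rintro t ⟨ht1, htx, hty⟩ ⟨ht2, -, -⟩
        rcases hWS t ht2 (hAS t ht1) with rfl | rfl
        · exact htx rfl
        · exact hty rfl
      · -- disjoint IB BW
        rw [Set.disjoint_left]
        rintro t ⟨ht1, hty, htx⟩ ⟨ht2, -, -⟩
        rcases hWS t ht2 (hBS t ht1) with rfl | rfl
        · exact htx rfl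
        · exact hty rfl
      · -- x adj into IA
        obtain ⟨t, ht, htx, hty, hadj⟩ :=
          exists_adj_interior A hApath (two_le_length_of_interior A haA hax hay)
        exact ⟨t, ⟨ht, htx, hty⟩, hadj⟩
      · -- x adj into IB : use B.reverse : Walk x y
        obtain ⟨t, ht, htx, hty, hadj⟩ :=
          exists_adj_interior B.reverse hBpath.reverse
            (by rw [Walk.length_reverse]; exact two_le_length_of_interior B hbB hby hbx)
        have ht' : t ∈ B.support := by rwa [Walk.support_reverse, List.mem_reverse] at ht
        exact ⟨t, ⟨ht', hty, htx⟩, hadj⟩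
      · -- x adj into BW
        obtain ⟨t, ht, htx, hty, hadj⟩ := exists_adj_interior Wp hWpath hW2
        exact ⟨t, ⟨ht, htx, hty⟩, hadj⟩
      · -- y adj into IA : A.reverse : Walk y x
        obtain ⟨t, ht, hty, htx, hadj⟩ :=
          exists_adj_interior A.reverse hApath.reverse
            (by rw [Walk.length_reverse]; exact two_le_length_of_interior A haA hax hay)
        have ht' : t ∈ A.support := by rwa [Walk.support_reverse, List.mem_reverse] at ht
        exact ⟨t, ⟨ht', htx, hty⟩, hadj⟩
      · -- y adj into IB : B : Walk y x
        obtain ⟨t, ht, hty, htx, hadj⟩ :=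
          exists_adj_interior B hBpath (two_le_length_of_interior B hbB hby hbx)
        exact ⟨t, ⟨ht, hty, htx⟩, hadj⟩
      · -- y adj into BW : Wp.reverse : Walk y x
        obtain ⟨t, ht, hty, htx, hadj⟩ :=
          exists_adj_interior Wp.reverse hWpath.reverse
            (by rw [Walk.length_reverse]; exact hW2)
        have ht' : t ∈ Wp.support := by rwa [Walk.support_reverse, List.mem_reverse] at ht
        exact ⟨t, ⟨ht', htx, hty⟩, hadj⟩
    · -- B has no interior: extend the cycle through Wp
      push_neg at hIB
      have hBedge : B.length = 1 := by
        refine (edge_of_no_interior B hBpath hyx ?_).1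
        intro t ht
        by_cases h1 : t = y
        · exact Or.inl h1
        · exact Or.inr ((hIB t ht h1))
      have hnew : (Wp.reverse.append A).IsCycle := by
        apply cycle_of_append Wp.reverse A hWpath.reverse hApath
        · rw [Walk.length_reverse]; exact hW2
        · intro t ht1 ht2
          have ht1' : t ∈ Wp.support := by rwa [Walk.support_reverse, List.mem_reverse] at ht1
          rcases hWS t ht1' (hAS t ht2) with rfl | rfl
          · exact Or.inr rfl
          · exact Or.inl rfl
      have hle := hmax y _ hnew
      rw [Walk.length_append, Walk.length_reverse] at hle
      omega
  · -- A has no interior: extend the cycle through Wp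
    push_neg at hIA
    have hAedge : A.length = 1 := by
      refine (edge_of_no_interior A hApath hxy ?_).1
      intro t ht
      by_cases h1 : t = x
      · exact Or.inl h1
      · exact Or.inr ((hIA t ht h1))
    have hnew : (Wp.append B).IsCycle := by
      apply cycle_of_append Wp B hWpath hBpath hW2
      intro t ht1 ht2
      exact hWS t ht1 (hBS t ht2)
    have hle := hmax x _ hnew
    rw [Walk.length_append] at hle
    omega


lemma edges_subset_of_ham (hK4 : ¬ HasMinor G (completeGraph (Fin 4)))
    {v1 v2 : V} {c1 : G.Walk v1 v1} {c2 : G.Walk v2 v2}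
    (h1 : c1.IsHamiltonianCycle) (h2 : c2.IsHamiltonianCycle) :
    ∀ e ∈ c2.edges, e ∈ c1.edges := by
  have key : ∀ x y : V, s(x, y) ∈ c2.edges → s(x, y) ∈ c1.edges := by
    intro x y he
    by_contra hne
    have hadj : G.Adj x y := c2.adj_of_mem_edges he
    have hxy : x ≠ y := hadj.ne
    have hyx : y ≠ x := hxy.symm
    have hx1 : x ∈ c1.support := h1.mem_support x
    set d := c1.rotate x hx1 with hd_def
    have hdcyc : d.IsCycle := h1.isCycle.rotate hx1
    have hdmem : ∀ t, t ∈ d.support ↔ t ∈ c1.support := by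
      intro t
      have hrot := (c1.support_rotate x hx1).mem_iff (a := t)
      constructor
      · intro ht
        rw [d.support_eq_cons, List.mem_cons] at ht
        rcases ht with rfl | ht
        · exact hx1
        · exact List.mem_of_mem_tail (hrot.mp ht)
      · intro ht
        rw [c1.support_eq_cons, List.mem_cons] at ht
        rcases ht with rfl | ht
        · exact List.mem_of_mem_tail
            (hrot.mpr (start_mem_support_tail c1 h1.isCycle.not_nil))
        · exact List.mem_of_mem_tail (hrot.mpr ht)
    have hdedge : ∀ e, e ∈ d.edges ↔ e ∈ c1.edges := fun e =>
      (c1.rotate_edges x hx1).mem_iff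
    have hdall : ∀ t, t ∈ d.support := fun t => (hdmem t).mpr (h1.mem_support t)
    have hyd : y ∈ d.support := hdall y
    obtain ⟨hApath, hBpath, hmeet⟩ := cycle_split d hdcyc hyd hyx
    set A := d.takeUntil y hyd with hA_def
    set B := d.dropUntil y hyd with hB_def
    have hIA : ∃ t, t ∈ A.support ∧ t ≠ x ∧ t ≠ y := by
      by_contra hno
      push_neg at hno
      have h' := (edge_of_no_interior A hApath hxy (fun t ht => by
        by_cases h : t = x
        · exact Or.inl h
        · exact Or.inr (hno t ht h))).2
      exact hne ((hdedge _).mp (d.edges_takeUntil_subset hyd h'))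
    have hIB : ∃ t, t ∈ B.support ∧ t ≠ y ∧ t ≠ x := by
      by_contra hno
      push_neg at hno
      have h' := (edge_of_no_interior B hBpath hyx (fun t ht => by
        by_cases h : t = y
        · exact Or.inl h
        · exact Or.inr (hno t ht h))).2
      have h'' : s(x, y) ∈ d.edges := by
        have := d.edges_dropUntil_subset hyd h'
        rwa [Sym2.eq_swap] at this
      exact hne ((hdedge _).mp h'')
    obtain ⟨a, haA, hax, hay⟩ := hIA
    obtain ⟨b, hbB, hby, hbx⟩ := hIB
    -- spanning path of c2 from y to x
    have hx2 : x ∈ c2.support := h2.mem_support x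
    set d2 := c2.rotate x hx2 with hd2_def
    have hd2cyc : d2.IsCycle := h2.isCycle.rotate hx2
    have hd2all : ∀ t, t ∈ d2.support := by
      intro t
      have hrot := (c2.support_rotate x hx2).mem_iff (a := t)
      have ht := h2.mem_support t
      rw [c2.support_eq_cons, List.mem_cons] at ht
      rcases ht with rfl | ht
      · exact List.mem_of_mem_tail
          (hrot.mpr (start_mem_support_tail c2 h2.isCycle.not_nil))
      · exact List.mem_of_mem_tail (hrot.mpr ht)
    have he2 : s(x, y) ∈ d2.edges := (c2.rotate_edges x hx2).mem_iff.mpr he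
    obtain ⟨t2, ht2path, ht2all⟩ := exists_spanning_path_of_edge hxy d2 hd2cyc hd2all he2
    -- decompose t2.support = y :: (m ++ [x])
    have hl : t2.support = y :: t2.support.tail := t2.support_eq_cons
    have hlrev : t2.support.reverse = x :: t2.reverse.support.tail := by
      rw [← Walk.support_reverse]
      exact t2.reverse.support_eq_cons
    have hsupp2 : t2.support = (t2.reverse.support.tail).reverse ++ [x] := by
      have h0 := congrArg List.reverse hlrev
      rwa [List.reverse_reverse, List.reverse_cons] at h0
    set rr := (t2.reverse.support.tail).reverse with hrr_def
    have heq : y :: t2.support.tail = rr ++ [x] := by rw [← hl, ← hsupp2]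
    have hrne : rr ≠ [] := by
      intro h0
      rw [h0, List.nil_append] at heq
      have := List.head_eq_of_cons_eq heq
      exact hxy this.symm
    obtain ⟨y', m, hym⟩ := List.exists_cons_of_ne_nil hrne
    have heq2 : y :: t2.support.tail = y' :: (m ++ [x]) := by
      rw [heq, hym]; simp
    have htail : t2.support.tail = m ++ [x] := List.tail_eq_of_cons_eq heq2
    have hsupp3 : t2.support = y :: (m ++ [x]) := by rw [hl, htail]
    -- chain
    have hchain : m.Chain' G.Adj := by
      have h0 : t2.support.Chain' G.Adj := t2.isChain_adj_support
      rw [hsupp3] at h0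
      exact (h0.tail).prefix (List.prefix_append m [x])
    -- nodup facts
    have hnd : t2.support.Nodup := ht2path.support_nodup
    rw [hsupp3, List.nodup_cons, List.nodup_append] at hnd
    have hym' : y ∉ m := fun h => hnd.1 (List.mem_append_left [x] h)
    have hxm : x ∉ m := fun h => hnd.2.2.2 _ h _ (List.mem_singleton_self x) rfl
    -- positions of a, b in m
    have hmem_m : ∀ t, t ≠ x → t ≠ y → t ∈ m := by
      intro t htx hty
      have := ht2all t
      rw [hsupp3, List.mem_cons, List.mem_append, List.mem_singleton] at this
      rcases this with h0 | h0 | h0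
      · exact absurd h0 hty
      · exact h0
      · exact absurd h0 htx
    have ham : a ∈ m := hmem_m a hax hay
    have hbm : b ∈ m := hmem_m b hbx hby
    -- every element of m is in IA or IB
    have hsplit : d.support = A.support ++ B.support.tail := by
      rw [← d.take_spec hyd, Walk.support_append]
    set P := {t | t ∈ A.support ∧ t ≠ x ∧ t ≠ y} with hP_def
    set Q := {t | t ∈ B.support ∧ t ≠ y ∧ t ≠ x} with hQ_def
    have hPQ : ∀ t, t ∈ P → t ∈ Q → False := by
      rintro t ⟨ht1, htx, hty⟩ ⟨ht2, -, -⟩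
      rcases hmeet t ht1 ht2 with rfl | rfl
      · exact htx rfl
      · exact hty rfl
    have hmemPQ : ∀ t ∈ m, t ∈ P ∨ t ∈ Q := by
      intro t htm
      have htx : t ≠ x := fun h => hxm (h ▸ htm)
      have hty : t ≠ y := fun h => hym' (h ▸ htm)
      have hd' := hdall t
      rw [hsplit, List.mem_append] at hd'
      rcases hd' with h0 | h0
      · exact Or.inl ⟨h0, htx, hty⟩
      · exact Or.inr ⟨List.mem_of_mem_tail h0, hty, htx⟩
    obtain ⟨pp, hpp, qq, hqq, hppqq⟩ :=
      chain_cross hPQ m hchain hmemPQ a ham ⟨haA, hax, hay⟩ b hbm ⟨hbB, hby, hbx⟩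
    exact hK4 (hasMinor_K4_of_chords d hdcyc hyd hyx hpp.1 hpp.2.1 hpp.2.2
      hqq.1 hqq.2.2 hqq.2.1 hadj hppqq)
  intro e he
  revert he
  induction e using Sym2.ind with
  | _ x y => exact key x y

end StmtAux

/-- Every biconnected outerplanar graph on at least 3 vertices has a unique
Hamiltonian cycle (unique as a set of edges). -/
theorem stmt16 {V : Type*} [Fintype V] [DecidableEq V] (G : SimpleGraph V)
    (hbc : Biconnected G) (hop : Outerplanar G) :
    ∃! E : Set (Sym2 V), ∃ (v : V) (c : G.Walk v v),
      c.IsHamiltonianCycle ∧ E = {e | e ∈ c.edges} := by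
  obtain ⟨v, c1, h1⟩ := StmtAux.exists_ham_cycle hbc hop.2
  refine ⟨{e | e ∈ c1.edges}, ⟨v, c1, h1, rfl⟩, ?_⟩
  rintro E ⟨v2, c2, h2, rfl⟩
  ext e
  simp only [Set.mem_setOf_eq]
  exact ⟨fun he => StmtAux.edges_subset_of_ham hop.1 h1 h2 e he,
         fun he => StmtAux.edges_subset_of_ham hop.1 h2 h1 e he⟩
end
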